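/- Let φ : W_Θ\W → H_Θ satisfy conditions (i) and (ii) of the Whittaker Kazhdan–Lusztig algorithm (φ(C) = δ_C + Σ_{D<C} P_{CD} δ_D with P_{CD} ∈ qZ[q], and for Cs_α < C, T_α(φ(Cs_α)) is an integer combination of φ(D), D ≤ C). Then each polynomial satisfies the parity condition P_{CD} = q^{ℓ(w^C)−ℓ(w^D)} Q_{CD} for some Q_{CD} ∈ Z[q², q⁻²]; equivalently, P_{CD}(q) = (−1)^{ℓ(w^C)−ℓ(w^D)} P_{CD}(−q). -/

import Mathlib

open CoxeterSystem LaurentPolynomial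
open scoped Classical

noncomputable section

variable {B W : Type} [Group W]

/-- The (strict) Bruhat order on a Coxeter group: `x < y` iff `y` can be obtained from `x`
by successively multiplying on the right by reflections, each time increasing the length. -/
def BruhatLT {M : CoxeterMatrix B} (cs : CoxeterSystem M W) : W → W → Prop :=
  Relation.TransGen
    (fun a b => (∃ t : W, cs.IsReflection t ∧ b = a * t) ∧ cs.length a < cs.length b)

/-- The Bruhat order (non-strict). -/
def BruhatLE {M : CoxeterMatrix B} (cs : CoxeterSystem M W) (x y : W) : Prop :=
  BruhatLT cs x y ∨ x = y

/-- The type of right cosets `H\W`. -/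
abbrev RightCoset (H : Subgroup W) : Type _ := Quotient (QuotientGroup.rightRel H)

/-- The right coset `H * x`. -/
def rcMk (H : Subgroup W) (x : W) : RightCoset H := Quotient.mk _ x

/-- Right multiplication of a right coset by a group element. -/
def rcMul (H : Subgroup W) (C : RightCoset H) (g : W) : RightCoset H :=
  Quotient.map (fun x => x * g)
    (by
      intro a b hab
      have h' := (QuotientGroup.rightRel_apply).mp hab
      exact (QuotientGroup.rightRel_apply).mpr (by
        simpa [mul_assoc, mul_inv_rev] using h')) C

/-- The standard parabolic subgroup `W_Θ` generated by the simple reflections from `Θ`. -/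
def WP {M : CoxeterMatrix B} (cs : CoxeterSystem M W) (Θ : Set B) : Subgroup W :=
  Subgroup.closure (cs.simple '' Θ)

/-- Right multiplication of a coset in `W_Θ\W` by the simple reflection `s_α`. -/
def sAct {M : CoxeterMatrix B} (cs : CoxeterSystem M W) (Θ : Set B) :
    RightCoset (WP cs Θ) → B → RightCoset (WP cs Θ) :=
  fun C α => rcMul _ C (cs.simple α)

/-- The Laurent polynomial variable `q`. -/
def qq : LaurentPolynomial ℤ := T 1

/-- The Laurent polynomial `q⁻¹`. -/
def qqinv : LaurentPolynomial ℤ := T (-1)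

/-- A Laurent polynomial lies in `q·ℤ[q]`, i.e. all coefficients in degrees `≤ 0` vanish. -/
def InQZq (p : LaurentPolynomial ℤ) : Prop := ∀ n : ℤ, n ≤ 0 → p.coeff n = 0

/-- The operator `T_α` on the free `ℤ[q,q⁻¹]`-module with basis indexed by `κ`,
relative to a right action `act` of the simple reflections on `κ` and a choice
`wc` of (longest) representative of each index:
`T_α δ_C = 0` if `Cs_α = C`; `q δ_C + δ_{Cs_α}` if `Cs_α > C`;
`q⁻¹ δ_C + δ_{Cs_α}` if `Cs_α < C` (Bruhat order on the representatives). -/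
def Tmap {M : CoxeterMatrix B} (cs : CoxeterSystem M W) {κ : Type}
    (act : κ → B → κ) (wc : κ → W) (α : B) :
    (κ →₀ LaurentPolynomial ℤ) →ₗ[LaurentPolynomial ℤ] (κ →₀ LaurentPolynomial ℤ) :=
  Finsupp.linearCombination (LaurentPolynomial ℤ) fun C =>
    if act C α = C then 0
    else if BruhatLT cs (wc C) (wc (act C α)) then
      qq • Finsupp.single C 1 + Finsupp.single (act C α) 1
    else
      qqinv • Finsupp.single C 1 + Finsupp.single (act C α) 1

/-! Write `w^D` for the longest element of the coset `D`. By Deodhar's lemma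
`w^{Ds_α} = w^D s_α` whenever `Ds_α ≠ D`, so `T_α` raises by one the parity of `n + ℓ(w^D)` on
every `q^n δ_D`.

Induct on `ℓ(w^C)`. If `C = W_Θ`, no coset lies below `C` and `φ(C) = δ_C`. Otherwise a right
descent `α` of the minimal representative of `C` gives `Cs_α < C`, and `T_α φ(Cs_α)` is
parity-homogeneous by induction. Since `φ(D) ∈ δ_D + qℤ[q]`, comparing degree-`0` coefficients in
`T_α φ(Cs_α) = Σ_D c_D φ(D)` gives `c_C = 1` and `c_D = 0` unless `ℓ(w^D) ≡ ℓ(w^C)`, so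
`φ(C) = T_α φ(Cs_α) - Σ_{D < C} c_D φ(D)` is parity-homogeneous as well.

Deodhar's lemma and the additivity `ℓ(h u) = ℓ(h) + ℓ(u)` (for `h ∈ W_Θ` and `u` minimal in
`W_Θ u`) rest on the exchange property, proved with the Björner–Brenti permutation representation
of `W` on reflections × signs. -/

section SignConj

variable {G : Type*} [Group G]

theorem conj_eq_iff_eq_conj_inv (x t b : G) : x * t * x⁻¹ = b ↔ t = x⁻¹ * b * x := by
  constructor <;> rintro rfl <;> group

def signConj (a : G) : Equiv.Perm (G × ℤˣ) where
  toFun p := (a * p.1 * a⁻¹, if p.1 = a then -p.2 else p.2)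
  invFun p := (a⁻¹ * p.1 * a, if p.1 = a then -p.2 else p.2)
  left_inv := by
    rintro ⟨t, e⟩
    by_cases h : t = a <;> simp [h, mul_inv_eq_one, mul_assoc]
  right_inv := by
    rintro ⟨t, e⟩
    have := conj_eq_iff_eq_conj_inv a⁻¹ t a
    by_cases h : t = a <;> simp_all [mul_assoc]

theorem signConj_apply (a t : G) (e : ℤˣ) :
    signConj a (t, e) = (a * t * a⁻¹, if t = a then -e else e) := rfl

section Dihedral

variable {a b : G} (ha : a * a = 1) (hb : b * b = 1)
include ha hb

theorem mul_pow_inv_of_involutions (k : ℕ) : ((a * b) ^ k)⁻¹ = (b * a) ^ k := by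
  rw [← inv_pow, mul_inv_rev, inv_eq_of_mul_eq_one_right ha, inv_eq_of_mul_eq_one_right hb]

theorem conj_mul_pow_eq_iff_of_involutions (k : ℕ) (t : G) :
    (a * b) ^ k * t * ((a * b) ^ k)⁻¹ = b ↔ t = (b * a) ^ (2 * k) * b := by
  have hshift : b * (a * b) ^ k = (b * a) ^ k * b :=
    SemiconjBy.pow_right (by simp only [SemiconjBy, mul_assoc]) k
  rw [conj_eq_iff_eq_conj_inv, mul_pow_inv_of_involutions ha hb, mul_assoc, hshift,
    ← mul_assoc, ← pow_add, two_mul]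

theorem conj_conj_mul_pow_eq_iff_of_involutions (k : ℕ) (t : G) :
    b * ((a * b) ^ k * t * ((a * b) ^ k)⁻¹) * b⁻¹ = a ↔ t = (b * a) ^ (2 * k + 1) * b := by
  have hshift : b * (a * b) ^ k = (b * a) ^ k * b :=
    SemiconjBy.pow_right (by simp only [SemiconjBy, mul_assoc]) k
  rw [conj_eq_iff_eq_conj_inv, conj_eq_iff_eq_conj_inv, inv_eq_of_mul_eq_one_right hb,
    mul_pow_inv_of_involutions ha hb]
  have : (b * a) ^ k * (b * a * b) * (a * b) ^ k = (b * a) ^ (2 * k + 1) * b := by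
    rw [mul_assoc, mul_assoc, hshift, ← mul_assoc, ← mul_assoc, ← pow_succ, ← pow_add]
    ring_nf
  rw [← this]

-- The `(b * a) ^ r * b` are the reflections of the dihedral group `⟨a, b⟩`.
theorem signConj_mul_pow_apply (k : ℕ) (t : G) (e : ℤˣ) :
    ((signConj a * signConj b) ^ k) (t, e) =
      ((a * b) ^ k * t * ((a * b) ^ k)⁻¹,
        e * ∏ r ∈ Finset.range (2 * k), if t = (b * a) ^ r * b then -1 else 1) := by
  induction k with
  | zero => simp
  | succ k ih =>
    rw [pow_succ', Equiv.Perm.mul_apply, ih, Equiv.Perm.mul_apply, signConj_apply, signConj_apply,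
      conj_mul_pow_eq_iff_of_involutions ha hb, conj_conj_mul_pow_eq_iff_of_involutions ha hb,
      show 2 * (k + 1) = 2 * k + 1 + 1 by ring, Finset.prod_range_succ, Finset.prod_range_succ]
    refine Prod.ext ?_ ?_
    · simp only [pow_succ', mul_inv_rev, mul_assoc]
    · dsimp only
      split_ifs <;> simp [mul_comm]

theorem signConj_mul_pow_eq_one {m : ℕ} (hm : (a * b) ^ m = 1) :
    (signConj a * signConj b) ^ m = 1 := by
  have hm' : (b * a) ^ m = 1 := by rw [← mul_pow_inv_of_involutions ha hb, hm, inv_one]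
  ext ⟨t, e⟩ : 1
  rw [signConj_mul_pow_apply ha hb, hm, two_mul, Finset.prod_range_add]
  -- the factors for `r` and `m + r` agree, so the sign is a square
  simp [pow_add, hm', ← sq, Int.units_sq]

end Dihedral

end SignConj

namespace CoxeterSystem

variable {B W : Type*} [Group W] {M : CoxeterMatrix B} (cs : CoxeterSystem M W)

def signRep : W →* Equiv.Perm (W × ℤˣ) :=
  cs.lift ⟨fun i => signConj (cs.simple i), fun i j =>
    signConj_mul_pow_eq_one (cs.simple_mul_simple_self i) (cs.simple_mul_simple_self j)
      (cs.simple_mul_simple_pow i j)⟩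

theorem signRep_simple (i : B) : cs.signRep (cs.simple i) = signConj (cs.simple i) :=
  cs.lift_apply_simple _ i

theorem count_leftInvSeq_cons (i : B) (ω : List B) (t : W) :
    (cs.leftInvSeq (i :: ω)).count t =
      (if t = cs.simple i then 1 else 0) +
        (cs.leftInvSeq ω).count (cs.simple i * t * cs.simple i) := by
  have hconj : MulAut.conj (cs.simple i) (cs.simple i * t * cs.simple i) = t := by
    simp [mul_assoc]
  show (cs.simple i :: (cs.leftInvSeq ω).map (MulAut.conj (cs.simple i))).count t = _
  rw [List.count_cons, ← hconj, List.count_map_of_injective _ _ (MulAut.conj _).injective, hconj]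
  simp only [beq_iff_eq, eq_comm (a := cs.simple i), add_comm]

theorem signRep_wordProd_inv_apply (ω : List B) (t : W) (e : ℤˣ) :
    cs.signRep (cs.wordProd ω)⁻¹ (t, e) =
      ((cs.wordProd ω)⁻¹ * t * cs.wordProd ω, e * (-1) ^ (cs.leftInvSeq ω).count t) := by
  induction ω generalizing t e with
  | nil => simp
  | cons i ω ih =>
    rw [cs.wordProd_cons, mul_inv_rev, map_mul, Equiv.Perm.mul_apply, cs.inv_simple,
      signRep_simple, signConj_apply, ih, count_leftInvSeq_cons, cs.inv_simple]
    refine Prod.ext (by simp [mul_assoc]) ?_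
    by_cases h : t = cs.simple i <;> simp [h, pow_add]

theorem neg_one_pow_count_leftInvSeq_congr {ω μ : List B} (h : cs.wordProd ω = cs.wordProd μ)
    (t : W) : ((-1 : ℤˣ) ^ (cs.leftInvSeq ω).count t) = (-1) ^ (cs.leftInvSeq μ).count t := by
  have hω := cs.signRep_wordProd_inv_apply ω t 1
  have hμ := cs.signRep_wordProd_inv_apply μ t 1
  rw [h] at hω
  simpa using congrArg Prod.snd (hω.symm.trans hμ)

theorem simple_mem_leftInvSeq_of_isLeftDescent {ω : List B} {i : B}
    (hi : cs.IsLeftDescent (cs.wordProd ω) i) : cs.simple i ∈ cs.leftInvSeq ω := by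
  -- `s i` occurs exactly once in the inversion sequence of the word `i :: μ` for `π ω`
  obtain ⟨μ, hμ, hμω⟩ := cs.exists_isReduced (cs.simple i * cs.wordProd ω)
  have hprod : cs.wordProd (i :: μ) = cs.wordProd ω := by
    rw [cs.wordProd_cons, ← hμω, cs.simple_mul_simple_cancel_left]
  have hnotmem : cs.simple i ∉ cs.leftInvSeq μ := fun hmem => by
    have := (cs.isLeftInversion_of_mem_leftInvSeq hμ hmem).2
    rw [← hμω, cs.simple_mul_simple_cancel_left] at this
    exact lt_asymm hi this
  have hcount := cs.neg_one_pow_count_leftInvSeq_congr hprod (cs.simple i)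
  rw [count_leftInvSeq_cons, if_pos rfl, cs.simple_mul_simple_self, one_mul,
    List.count_eq_zero_of_not_mem hnotmem] at hcount
  by_contra h
  rw [List.count_eq_zero_of_not_mem h] at hcount
  simp at hcount

theorem exists_eraseIdx_of_isLeftDescent {ω : List B} {i : B}
    (hi : cs.IsLeftDescent (cs.wordProd ω) i) :
    ∃ j < ω.length, cs.simple i * cs.wordProd ω = cs.wordProd (ω.eraseIdx j) := by
  obtain ⟨j, hj, hget⟩ :=
    List.mem_iff_getElem.mp (cs.simple_mem_leftInvSeq_of_isLeftDescent hi)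
  refine ⟨j, by simpa using hj, ?_⟩
  rw [← cs.getD_leftInvSeq_mul_wordProd, List.getD_eq_getElem _ _ hj, hget]

theorem exists_eraseIdx_append_of_isLeftDescent {ω₁ ω₂ : List B} {i : B}
    (hi : cs.IsLeftDescent (cs.wordProd ω₁ * cs.wordProd ω₂) i) :
    (∃ j < ω₁.length, cs.simple i * cs.wordProd ω₁ = cs.wordProd (ω₁.eraseIdx j)) ∨
      ∃ j < ω₂.length, cs.simple i * cs.wordProd ω₁ * cs.wordProd ω₂ =
        cs.wordProd ω₁ * cs.wordProd (ω₂.eraseIdx j) := by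
  rw [← cs.wordProd_append] at hi
  obtain ⟨j, hj, hexch⟩ := cs.exists_eraseIdx_of_isLeftDescent hi
  rw [List.length_append] at hj
  by_cases hj₁ : j < ω₁.length
  · rw [List.eraseIdx_append_of_lt_length hj₁, cs.wordProd_append, cs.wordProd_append,
      ← mul_assoc] at hexch
    exact .inl ⟨j, hj₁, mul_right_cancel hexch⟩
  · rw [List.eraseIdx_append_of_length_le (not_lt.mp hj₁), cs.wordProd_append,
      cs.wordProd_append, ← mul_assoc] at hexch
    exact .inr ⟨j - ω₁.length, by omega, hexch⟩

theorem natCast_length_mul_simple (w : W) (i : B) :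
    (cs.length (w * cs.simple i) : ZMod 2) = cs.length w + 1 := by
  rcases cs.length_mul_simple w i with h | h
  · rw [h, Nat.cast_succ]
  · rw [← h, Nat.cast_succ, add_assoc, CharTwo.add_self_eq_zero, add_zero]

end CoxeterSystem

theorem length_lt_of_bruhatLT {M : CoxeterMatrix B} (cs : CoxeterSystem M W) {x y : W}
    (h : BruhatLT cs x y) : cs.length x < cs.length y := by
  induction h with
  | single h => exact h.2
  | tail _ h ih => exact ih.trans h.2

section Parabolic

variable {M : CoxeterMatrix B} (cs : CoxeterSystem M W) (Θ : Set B)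

theorem rcMk_eq_rcMk_iff (H : Subgroup W) (x y : W) : rcMk H x = rcMk H y ↔ x * y⁻¹ ∈ H := by
  rw [rcMk, rcMk, Quotient.eq, QuotientGroup.rightRel_apply, ← inv_mem_iff, mul_inv_rev, inv_inv]

theorem rcMk_surjective (H : Subgroup W) : Function.Surjective (rcMk H) :=
  Quotient.mk_surjective

theorem sAct_rcMk (x : W) (α : B) :
    sAct cs Θ (rcMk (WP cs Θ) x) α = rcMk (WP cs Θ) (x * cs.simple α) := rfl

theorem sAct_sAct (C : RightCoset (WP cs Θ)) (α : B) : sAct cs Θ (sAct cs Θ C α) α = C := by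
  obtain ⟨x, rfl⟩ := rcMk_surjective _ C
  rw [sAct_rcMk, sAct_rcMk, cs.simple_mul_simple_cancel_right]

theorem simple_mem_WP {β : B} (hβ : β ∈ Θ) : cs.simple β ∈ WP cs Θ :=
  Subgroup.subset_closure ⟨β, hβ, rfl⟩

theorem wordProd_mem_WP {ω : List B} (hω : ∀ b ∈ ω, b ∈ Θ) : cs.wordProd ω ∈ WP cs Θ :=
  Subgroup.list_prod_mem _ (by simpa using fun b hb => simple_mem_WP cs Θ (hω b hb))

theorem exists_word_of_mem_WP {h : W} (hh : h ∈ WP cs Θ) :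
    ∃ ω : List B, (∀ b ∈ ω, b ∈ Θ) ∧ cs.wordProd ω = h := by
  induction hh using Subgroup.closure_induction with
  | mem x hx =>
    obtain ⟨β, hβ, rfl⟩ := hx
    exact ⟨[β], by simpa using hβ, cs.wordProd_singleton β⟩
  | one => exact ⟨[], by simp, cs.wordProd_nil⟩
  | mul x y _ _ hx hy =>
    obtain ⟨ω₁, hΘ₁, rfl⟩ := hx
    obtain ⟨ω₂, hΘ₂, rfl⟩ := hy
    exact ⟨ω₁ ++ ω₂, by simpa [or_imp, forall_and] using ⟨hΘ₁, hΘ₂⟩, cs.wordProd_append ω₁ ω₂⟩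
  | inv x _ hx =>
    obtain ⟨ω, hΘ, rfl⟩ := hx
    exact ⟨ω.reverse, by simpa using hΘ, cs.wordProd_reverse ω⟩

def IsShortestWordIn (ω : List B) : Prop :=
  (∀ b ∈ ω, b ∈ Θ) ∧
    ∀ μ : List B, (∀ b ∈ μ, b ∈ Θ) → cs.wordProd μ = cs.wordProd ω → ω.length ≤ μ.length

theorem IsShortestWordIn.of_cons {β : B} {ω : List B} (hω : IsShortestWordIn cs Θ (β :: ω)) :
    IsShortestWordIn cs Θ ω := by
  refine ⟨fun b hb => hω.1 b (List.mem_cons_of_mem _ hb), fun μ hμ hμω => ?_⟩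
  have := hω.2 (β :: μ) (by simpa using ⟨hω.1 β List.mem_cons_self, hμ⟩)
    (by rw [cs.wordProd_cons, cs.wordProd_cons, hμω])
  simpa using this

theorem exists_isShortestWordIn_of_mem_WP {h : W} (hh : h ∈ WP cs Θ) :
    ∃ ω, IsShortestWordIn cs Θ ω ∧ cs.wordProd ω = h := by
  have hex : ∃ n, ∃ ω : List B, ω.length = n ∧ (∀ b ∈ ω, b ∈ Θ) ∧ cs.wordProd ω = h := by
    obtain ⟨ω, hω⟩ := exists_word_of_mem_WP cs Θ hh
    exact ⟨_, ω, rfl, hω⟩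
  obtain ⟨ω, hlen, hΘ, rfl⟩ := Nat.find_spec hex
  exact ⟨ω, ⟨hΘ, fun μ hμ hμω => hlen ▸ Nat.find_min' hex ⟨μ, rfl, hμ, hμω⟩⟩, rfl⟩

def IsMinimalCosetRep (u : W) : Prop :=
  ∀ x : W, x * u⁻¹ ∈ WP cs Θ → cs.length u ≤ cs.length x

theorem exists_isMinimalCosetRep (C : RightCoset (WP cs Θ)) :
    ∃ u, rcMk (WP cs Θ) u = C ∧ IsMinimalCosetRep cs Θ u := by
  obtain ⟨u, hu, hmin⟩ := (InvImage.wf cs.length wellFounded_lt).has_min {x | rcMk _ x = C}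
    ((rcMk_surjective _ C).imp fun _ h => h)
  refine ⟨u, hu, fun x hx => not_lt.mp (hmin x ?_)⟩
  rw [Set.mem_ofPred_eq, ← hu, rcMk_eq_rcMk_iff]
  exact hx

theorem not_isLeftDescent_wordProd_mul {u : W} (hu : IsMinimalCosetRep cs Θ u) {β : B}
    {ω : List B} (hβω : IsShortestWordIn cs Θ (β :: ω)) :
    ¬ cs.IsLeftDescent (cs.wordProd ω * u) β := by
  intro hdesc
  obtain ⟨ν, hν, rfl⟩ := cs.exists_isReduced u
  rcases cs.exists_eraseIdx_append_of_isLeftDescent hdesc with ⟨j, hj, hdel⟩ | ⟨j, hj, hdel⟩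
  · have := hβω.2 (ω.eraseIdx j)
      (fun b hb => hβω.1 b (List.mem_cons_of_mem _ ((List.eraseIdx_sublist _ _).mem hb)))
      (by rw [cs.wordProd_cons, hdel])
    simp only [List.length_eraseIdx, hj, if_true, List.length_cons] at this
    omega
  · have hω : cs.wordProd ω ∈ WP cs Θ := wordProd_mem_WP cs Θ (hβω.of_cons cs Θ).1
    have hβ : cs.simple β ∈ WP cs Θ := simple_mem_WP cs Θ (hβω.1 β List.mem_cons_self)
    have hcoset : cs.wordProd (ν.eraseIdx j) * (cs.wordProd ν)⁻¹ ∈ WP cs Θ := by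
      have : cs.wordProd (ν.eraseIdx j) * (cs.wordProd ν)⁻¹ =
          (cs.wordProd ω)⁻¹ * cs.simple β * cs.wordProd ω := by
        rw [eq_inv_mul_of_mul_eq hdel.symm]
        group
      rw [this]
      exact mul_mem (mul_mem (inv_mem hω) hβ) hω
    have := hu _ hcoset
    have := cs.length_wordProd_le (ν.eraseIdx j)
    simp only [List.length_eraseIdx, hj, if_true] at this
    rw [hν] at *
    omega

theorem length_wordProd_mul_of_isShortestWordIn {u : W} (hu : IsMinimalCosetRep cs Θ u) :
    ∀ {ω : List B}, IsShortestWordIn cs Θ ω →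
      cs.length (cs.wordProd ω * u) = ω.length + cs.length u
  | [], _ => by simp
  | β :: ω, hβω => by
    have ih := length_wordProd_mul_of_isShortestWordIn hu (hβω.of_cons cs Θ)
    have hasc := not_isLeftDescent_wordProd_mul cs Θ hu hβω
    rw [CoxeterSystem.IsLeftDescent] at hasc
    rw [cs.wordProd_cons, mul_assoc, List.length_cons]
    rcases cs.length_simple_mul (cs.wordProd ω * u) β with h | h <;> omega

theorem length_mul_of_mem_WP {h u : W} (hh : h ∈ WP cs Θ) (hu : IsMinimalCosetRep cs Θ u) :
    cs.length (h * u) = cs.length h + cs.length u := by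
  obtain ⟨ω, hω, rfl⟩ := exists_isShortestWordIn_of_mem_WP cs Θ hh
  have hlen := length_wordProd_mul_of_isShortestWordIn cs Θ (u := 1) (fun x _ => by simp) hω
  rw [mul_one, cs.length_one, add_zero] at hlen
  rw [hlen]
  exact length_wordProd_mul_of_isShortestWordIn cs Θ hu hω

theorem exists_isLeftDescent_of_not_isMinimalCosetRep {x : W}
    (hx : ¬ IsMinimalCosetRep cs Θ x) : ∃ β ∈ Θ, cs.IsLeftDescent x β := by
  obtain ⟨u, hux, hu⟩ := exists_isMinimalCosetRep cs Θ (rcMk _ x)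
  rw [eq_comm, rcMk_eq_rcMk_iff] at hux
  obtain ⟨ω, hω, hωx⟩ := exists_isShortestWordIn_of_mem_WP cs Θ hux
  have hxω : x = cs.wordProd ω * u := by rw [hωx]; group
  have hlen := length_wordProd_mul_of_isShortestWordIn cs Θ hu hω
  rw [← hxω] at hlen
  cases ω with
  | nil => exact absurd (by rwa [hxω, cs.wordProd_nil, one_mul]) hx
  | cons β ω =>
    refine ⟨β, hω.1 β List.mem_cons_self, ?_⟩
    have : cs.simple β * x = cs.wordProd ω * u := by
      rw [hxω, cs.wordProd_cons, mul_assoc, cs.simple_mul_simple_cancel_left]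
    rw [CoxeterSystem.IsLeftDescent, this, hlen, List.length_cons]
    calc cs.length (cs.wordProd ω * u) ≤ cs.length (cs.wordProd ω) + cs.length u :=
          cs.length_mul_le _ _
      _ < ω.length + 1 + cs.length u := by have := cs.length_wordProd_le ω; omega

-- Deodhar's lemma
theorem IsMinimalCosetRep.mul_simple {u : W} (hu : IsMinimalCosetRep cs Θ u) {α : B}
    (hα : u * cs.simple α * u⁻¹ ∉ WP cs Θ) : IsMinimalCosetRep cs Θ (u * cs.simple α) := by
  rcases cs.length_mul_simple u α with hup | hdown
  · by_contra hnot
    obtain ⟨β, hβ, hdesc⟩ := exists_isLeftDescent_of_not_isMinimalCosetRep cs Θ hnot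
    obtain ⟨ν, hν, rfl⟩ := cs.exists_isReduced u
    rw [← cs.wordProd_singleton α] at hdesc
    rcases cs.exists_eraseIdx_append_of_isLeftDescent hdesc with ⟨j, hj, hdel⟩ | ⟨j, hj, hdel⟩
    · have := hu (cs.simple β * cs.wordProd ν) (by simpa using simple_mem_WP cs Θ hβ)
      rw [hdel] at this
      have := cs.length_wordProd_le (ν.eraseIdx j)
      simp only [List.length_eraseIdx, hj, if_true] at this
      rw [hν] at *
      omega
    · obtain rfl : j = 0 := by simpa using hj
      rw [List.eraseIdx_cons_zero, cs.wordProd_nil, mul_one, cs.wordProd_singleton,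
        mul_assoc, ← eq_inv_mul_iff_mul_eq, ← mul_inv_eq_iff_eq_mul] at hdel
      exact hα (by rw [hdel, cs.inv_simple]; exact simple_mem_WP cs Θ hβ)
  · intro x hx
    have := hu (x * cs.simple α) (by simpa [mul_assoc] using hx)
    have := cs.length_mul_le x (cs.simple α)
    rw [cs.length_simple] at this
    omega

section LongestRep

variable {wc : RightCoset (WP cs Θ) → W} (hmem : ∀ C, rcMk (WP cs Θ) (wc C) = C)

include hmem in
theorem wc_injective : Function.Injective wc := fun C D h => by rw [← hmem C, ← hmem D, h]

include hmem in
theorem wc_rcMk_one_mem_WP : wc (rcMk _ 1) ∈ WP cs Θ := by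
  simpa [rcMk_eq_rcMk_iff] using hmem (rcMk _ 1)

variable (hmax : ∀ C x, rcMk (WP cs Θ) x = C → cs.length x ≤ cs.length (wc C))
  (huniq : ∀ C x, rcMk (WP cs Θ) x = C → cs.length x = cs.length (wc C) → x = wc C)
include hmem hmax huniq

theorem wc_rcMk_eq_mul {u : W} (hu : IsMinimalCosetRep cs Θ u) :
    wc (rcMk _ u) = wc (rcMk _ 1) * u := by
  have hw₀ := wc_rcMk_one_mem_WP cs Θ hmem
  have hlen := length_mul_of_mem_WP cs Θ hw₀ hu
  have hbound : ∀ y, rcMk _ y = rcMk (WP cs Θ) u → cs.length y ≤ cs.length (wc (rcMk _ 1) * u) := by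
    intro y hy
    rw [rcMk_eq_rcMk_iff] at hy
    have := hmax (rcMk _ 1) (y * u⁻¹) (by simpa [rcMk_eq_rcMk_iff] using hy)
    have hy' := length_mul_of_mem_WP cs Θ hy hu
    rw [inv_mul_cancel_right] at hy'
    omega
  have hmemu : rcMk _ (wc (rcMk _ 1) * u) = rcMk (WP cs Θ) u := by
    simpa [rcMk_eq_rcMk_iff] using hw₀
  exact (huniq _ _ hmemu (le_antisymm (hmax _ _ hmemu) (hbound _ (hmem _)))).symm

theorem length_wc_rcMk {u : W} (hu : IsMinimalCosetRep cs Θ u) :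
    cs.length (wc (rcMk _ u)) = cs.length (wc (rcMk _ 1)) + cs.length u := by
  rw [wc_rcMk_eq_mul cs Θ hmem hmax huniq hu]
  exact length_mul_of_mem_WP cs Θ (wc_rcMk_one_mem_WP cs Θ hmem) hu

theorem wc_sAct {C : RightCoset (WP cs Θ)} {α : B} (hC : sAct cs Θ C α ≠ C) :
    wc (sAct cs Θ C α) = wc C * cs.simple α := by
  obtain ⟨u, rfl, hu⟩ := exists_isMinimalCosetRep cs Θ C
  rw [sAct_rcMk, ne_eq, rcMk_eq_rcMk_iff] at hC
  rw [sAct_rcMk, wc_rcMk_eq_mul cs Θ hmem hmax huniq (hu.mul_simple cs Θ hC),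
    wc_rcMk_eq_mul cs Θ hmem hmax huniq hu, mul_assoc]

theorem forall_not_bruhatLT_or_exists_bruhatLT_sAct (C : RightCoset (WP cs Θ)) :
    (∀ D, ¬ BruhatLT cs (wc D) (wc C)) ∨ ∃ α, BruhatLT cs (wc (sAct cs Θ C α)) (wc C) := by
  obtain ⟨u, rfl, hu⟩ := exists_isMinimalCosetRep cs Θ C
  by_cases hu1 : u = 1
  · left
    intro D hlt
    obtain ⟨v, rfl, hv⟩ := exists_isMinimalCosetRep cs Θ D
    have := length_lt_of_bruhatLT cs hlt
    rw [length_wc_rcMk cs Θ hmem hmax huniq hu, length_wc_rcMk cs Θ hmem hmax huniq hv, hu1,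
      cs.length_one] at this
    omega
  · right
    obtain ⟨α, hα⟩ := cs.exists_rightDescent_of_ne_one hu1
    have hC : sAct cs Θ (rcMk _ u) α ≠ rcMk _ u := fun h => by
      rw [sAct_rcMk, rcMk_eq_rcMk_iff] at h
      exact absurd (hu _ h) (not_le.mpr hα)
    refine ⟨α, .single ⟨⟨cs.simple α, cs.isReflection_simple α, ?_⟩, ?_⟩⟩
    · rw [wc_sAct cs Θ hmem hmax huniq hC, cs.simple_mul_simple_cancel_right]
    · rw [wc_sAct cs Θ hmem hmax huniq hC, wc_rcMk_eq_mul cs Θ hmem hmax huniq hu, mul_assoc,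
        length_mul_of_mem_WP cs Θ (wc_rcMk_one_mem_WP cs Θ hmem) hu]
      have := cs.length_mul_le (wc (rcMk _ 1)) (u * cs.simple α)
      rw [IsRightDescent] at hα
      omega

end LongestRep

end Parabolic

theorem LaurentPolynomial.coeff_mul_T (p : ℤ[T;T⁻¹]) (e n : ℤ) :
    (p * T e).coeff n = p.coeff (n - e) := by
  rw [T, AddMonoidAlgebra.coeff_mul_single_apply, mul_one, sub_eq_add_neg]

def parityComponent (k : ZMod 2) : AddSubgroup ℤ[T;T⁻¹] where
  carrier := {p | ∀ n : ℤ, (n : ZMod 2) ≠ k → p.coeff n = 0}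
  zero_mem' := by simp
  add_mem' hp hq n hn := by simp [hp n hn, hq n hn]
  neg_mem' hp n hn := by simp [hp n hn]

theorem one_mem_parityComponent_zero : (1 : ℤ[T;T⁻¹]) ∈ parityComponent 0 := by
  intro n hn
  rw [← T_zero, T_apply, if_neg]
  rintro rfl
  exact hn Int.cast_zero

theorem mul_T_mem_parityComponent {p : ℤ[T;T⁻¹]} {k : ZMod 2} (hp : p ∈ parityComponent k)
    (e : ℤ) : p * T e ∈ parityComponent (k + e) := by
  intro n hn
  rw [LaurentPolynomial.coeff_mul_T]
  exact hp _ (by push_cast; contrapose! hn; rw [← hn]; ring)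

theorem parity_eq_zero_of_coeff_zero_ne_zero {p : ℤ[T;T⁻¹]} {k : ZMod 2}
    (hp : p ∈ parityComponent k) (h0 : p.coeff 0 ≠ 0) : k = 0 := by
  by_contra hk
  exact h0 (hp 0 (by simpa using Ne.symm hk))

def parityComponentVec {κ : Type*} (g : κ → ZMod 2) (k : ZMod 2) :
    AddSubgroup (κ →₀ ℤ[T;T⁻¹]) where
  carrier := {v | ∀ F, v F ∈ parityComponent (k - g F)}
  zero_mem' _ := zero_mem _
  add_mem' hv hw F := add_mem (hv F) (hw F)
  neg_mem' hv F := neg_mem (hv F)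

section Tmap

variable {M : CoxeterMatrix B} (cs : CoxeterSystem M W) {κ : Type} (act : κ → B → κ)
  (wc : κ → W) (α : B)

theorem Tmap_apply (hact : ∀ F, act (act F α) α = F) (v : κ →₀ ℤ[T;T⁻¹]) (F : κ) :
    Tmap cs act wc α v F =
      if act F α = F then 0
      else v F * (if BruhatLT cs (wc F) (wc (act F α)) then qq else qqinv) + v (act F α) := by
  induction v using Finsupp.induction_linear with
  | zero => simp
  | add v w hv hw => simp only [map_add, Finsupp.add_apply, hv, hw]; split_ifs <;> ring
  | single D p =>
    rw [Tmap, Finsupp.linearCombination_single]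
    by_cases hDF : D = F
    · subst hDF
      split_ifs <;> simp_all
    · by_cases hFD : act F α = D
      · subst hFD
        rw [hact, if_neg (Ne.symm hDF), if_neg hDF]
        split_ifs <;> simp [Ne.symm hDF]
      · have hDF' : act D α ≠ F := fun h => hFD (h ▸ hact D)
        split_ifs <;> simp [hDF, hDF', Ne.symm hFD]

theorem Tmap_mem_parityComponentVec (hact : ∀ F, act (act F α) α = F) {g : κ → ZMod 2}
    (hg : ∀ F, act F α ≠ F → g (act F α) = g F + 1) {k : ZMod 2} {v : κ →₀ ℤ[T;T⁻¹]}
    (hv : v ∈ parityComponentVec g k) : Tmap cs act wc α v ∈ parityComponentVec g (k + 1) := by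
  intro F
  rw [Tmap_apply cs act wc α hact]
  split_ifs with hF hlt
  · exact zero_mem _
  all_goals
    have hFs : v (act F α) ∈ parityComponent (k + 1 - g F) := by
      convert hv (act F α) using 2
      rw [hg F hF]
      grind
  · rw [qq]
    refine add_mem ?_ hFs
    convert mul_T_mem_parityComponent (hv F) 1 using 2
    push_cast
    ring
  · rw [qqinv]
    refine add_mem ?_ hFs
    convert mul_T_mem_parityComponent (hv F) (-1) using 2
    push_cast
    grind

end Tmap

theorem coeff_zero_finsuppSum_zsmul {κ : Type*} {φ : κ → κ →₀ ℤ[T;T⁻¹]}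
    (hdiag : ∀ C, φ C C = 1) (hoff : ∀ C D, D ≠ C → (φ C D).coeff 0 = 0) (c : κ →₀ ℤ) (F : κ) :
    ((c.sum fun D n => n • φ D) F).coeff 0 = c F := by
  have hφ : ∀ D, (φ D F).coeff 0 = if D = F then 1 else 0 := by
    intro D
    split_ifs with h
    · rw [h, hdiag, ← T_zero, T_apply, if_pos rfl]
    · exact hoff D F (Ne.symm h)
  simp only [Finsupp.sum_apply, AddMonoidAlgebra.coeff_finsuppSum, Finsupp.smul_apply,
    AddMonoidAlgebra.coeff_smul_apply, hφ, smul_eq_mul, mul_ite, mul_one, mul_zero]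
  exact Finsupp.sum_ite_self_eq' c F

theorem mem_parityComponentVec_of_eq_finsuppSum {κ : Type*} {φ : κ → κ →₀ ℤ[T;T⁻¹]}
    (hdiag : ∀ C, φ C C = 1) (hoff : ∀ C D, D ≠ C → (φ C D).coeff 0 = 0)
    {g : κ → ZMod 2} {k : ZMod 2} {x : κ →₀ ℤ[T;T⁻¹]} (hx : x ∈ parityComponentVec g k)
    {c : κ →₀ ℤ} (hc : x = c.sum fun D n => n • φ D) {C : κ} (hxC : (x C).coeff 0 = 1)
    (hφ : ∀ D ≠ C, c D ≠ 0 → g D = k → φ D ∈ parityComponentVec g k) :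
    φ C ∈ parityComponentVec g k := by
  have hcoeff : ∀ F, c F = (x F).coeff 0 := fun F => by
    rw [hc, coeff_zero_finsuppSum_zsmul hdiag hoff]
  have hsplit : x = φ C + (c.erase C).sum fun D n => n • φ D := by
    rw [hc, ← Finsupp.add_sum_erase' c C (fun D n => n • φ D) fun _ => zero_smul _ _,
      hcoeff, hxC, one_smul]
  rw [eq_sub_of_add_eq hsplit.symm]
  refine sub_mem hx (AddSubmonoidClass.finsuppSum_mem _ _ _ fun D hD => zsmul_mem ?_ _)
  have hDC : D ≠ C := by rintro rfl; simp at hD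
  rw [Finsupp.erase_ne hDC] at hD
  exact hφ D hDC hD
    (sub_eq_zero.mp (parity_eq_zero_of_coeff_zero_ne_zero (hx D) (hcoeff D ▸ hD))).symm

section Whittaker

variable {M : CoxeterMatrix B} (cs : CoxeterSystem M W) {κ : Type} (act : κ → B → κ)
  (wc : κ → W)

theorem mem_parityComponentVec_of_whittaker {g : κ → ZMod 2}
    (hact : ∀ F α, act (act F α) α = F) (hg : ∀ F α, act F α ≠ F → g (act F α) = g F + 1)
    (hwc : Function.Injective wc)
    (hdesc : ∀ C, (∀ D, ¬ BruhatLT cs (wc D) (wc C)) ∨ ∃ α, BruhatLT cs (wc (act C α)) (wc C))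
    (φ : κ → κ →₀ ℤ[T;T⁻¹])
    (hφ1 : ∀ C, φ C C = 1 ∧
      ∀ D, D ≠ C → φ C D ≠ 0 → BruhatLT cs (wc D) (wc C) ∧ InQZq (φ C D))
    (hφ2 : ∀ α C, BruhatLT cs (wc (act C α)) (wc C) →
      ∃ c : κ →₀ ℤ, (∀ D ∈ c.support, BruhatLE cs (wc D) (wc C)) ∧
        Tmap cs act wc α (φ (act C α)) = c.sum fun D n => n • φ D)
    (C : κ) : φ C ∈ parityComponentVec g (g C) := by
  have hoff : ∀ C D, D ≠ C → (φ C D).coeff 0 = 0 := fun C D hDC => by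
    by_cases h : φ C D = 0
    · rw [h, AddMonoidAlgebra.coeff_zero, Finsupp.zero_apply]
    · exact ((hφ1 C).2 D hDC h).2 0 le_rfl
  induction C using (InvImage.wf (fun C => cs.length (wc C)) wellFounded_lt).induction with
  | _ C ih =>
  rcases hdesc C with hmin | ⟨α, hlt⟩
  · intro F
    by_cases hF : F = C
    · rw [hF, (hφ1 C).1, sub_self]
      exact one_mem_parityComponent_zero
    · rw [show φ C F = 0 from by_contra fun h => hmin F ((hφ1 C).2 F hF h).1]
      exact zero_mem _
  obtain ⟨c, hsupp, hc⟩ := hφ2 α C hlt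
  generalize hE : act C α = E at hlt hc
  have hEC : act E α = C := hE ▸ hact C α
  have hlen := length_lt_of_bruhatLT cs hlt
  have hCE : C ≠ E := fun h => (h ▸ hlen).false
  have hT : Tmap cs act wc α (φ E) ∈ parityComponentVec g (g C) := by
    have := hg E α (by rw [hEC]; exact hCE)
    rw [hEC] at this
    exact this ▸ Tmap_mem_parityComponentVec cs act wc α (hact · α) (hg · α) (ih E hlen)
  have hφEC : φ E C = 0 := by_contra fun h =>
    (length_lt_of_bruhatLT cs ((hφ1 E).2 C hCE h).1).asymm hlen
  have hTC : (Tmap cs act wc α (φ E) C).coeff 0 = 1 := by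
    rw [Tmap_apply cs act wc α (hact · α), hE, if_neg hCE.symm, hφEC, (hφ1 E).1,
      zero_mul, zero_add, ← T_zero, T_apply, if_pos rfl]
  refine mem_parityComponentVec_of_eq_finsuppSum (fun C => (hφ1 C).1) hoff hT hc hTC
    fun D hDC hcD hgD => hgD ▸ ih D (length_lt_of_bruhatLT cs ?_)
  exact (hsupp D (Finsupp.mem_support_iff.mpr hcD)).resolve_right fun h => hDC (hwc h)

end Whittaker

theorem stmt2_general {M : CoxeterMatrix B} (cs : CoxeterSystem M W) (Θ : Set B)
    (wc : RightCoset (WP cs Θ) → W)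
    (hmem : ∀ C, rcMk (WP cs Θ) (wc C) = C)
    (hmax : ∀ C x, rcMk (WP cs Θ) x = C → cs.length x ≤ cs.length (wc C))
    (huniq : ∀ C x, rcMk (WP cs Θ) x = C → cs.length x = cs.length (wc C) → x = wc C)
    (φ : RightCoset (WP cs Θ) → (RightCoset (WP cs Θ) →₀ LaurentPolynomial ℤ))
    -- condition (i)
    (hφ1 : ∀ C, (φ C) C = 1 ∧
      ∀ D, D ≠ C → (φ C) D ≠ 0 → BruhatLT cs (wc D) (wc C) ∧ InQZq ((φ C) D))
    -- condition (ii)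
    (hφ2 : ∀ (α : B) (C : RightCoset (WP cs Θ)),
      BruhatLT cs (wc (sAct cs Θ C α)) (wc C) →
      ∃ c : RightCoset (WP cs Θ) →₀ ℤ,
        (∀ D ∈ c.support, BruhatLE cs (wc D) (wc C)) ∧
        Tmap cs (sAct cs Θ) wc α (φ (sAct cs Θ C α)) = c.sum fun D n => n • φ D) :
    ∀ (C D : RightCoset (WP cs Θ)) (n : ℤ),
      Odd (n - ((cs.length (wc C) : ℤ) - (cs.length (wc D) : ℤ))) → ((φ C) D).coeff n = 0 := by
  intro C D n hodd
  have hg : ∀ F α, sAct cs Θ F α ≠ F →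
      (cs.length (wc (sAct cs Θ F α)) : ZMod 2) = cs.length (wc F) + 1 := fun F α hF => by
    rw [wc_sAct cs Θ hmem hmax huniq hF, cs.natCast_length_mul_simple]
  have hpar := mem_parityComponentVec_of_whittaker cs (sAct cs Θ) wc
    (g := fun C => (cs.length (wc C) : ZMod 2)) (sAct_sAct cs Θ) hg
    (wc_injective cs Θ hmem) (forall_not_bruhatLT_or_exists_bruhatLT_sAct cs Θ hmem hmax huniq)
    φ hφ1 hφ2 C D
  refine hpar n fun h => ?_
  have hodd' := hodd.intCast_zmod_two
  push_cast at hodd'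
  rw [h, sub_self] at hodd'
  exact zero_ne_one hodd'

/-- (Parity of Whittaker Kazhdan–Lusztig polynomials.)
If `φ : W_Θ\W → H_Θ` satisfies conditions (i) and (ii) of the Whittaker
Kazhdan–Lusztig algorithm, then each coefficient polynomial `P_{CD}` satisfies
`P_{CD} = q^{ℓ(w^C) − ℓ(w^D)} Q_{CD}` with `Q_{CD} ∈ ℤ[q²,q⁻²]`; equivalently, every
coefficient of `P_{CD}` in a degree not congruent to `ℓ(w^C) − ℓ(w^D)` mod 2 vanishes. -/
theorem stmt2 [Finite W] {M : CoxeterMatrix B} (cs : CoxeterSystem M W) (Θ : Set B)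
    (wc : RightCoset (WP cs Θ) → W)
    (hmem : ∀ C, rcMk (WP cs Θ) (wc C) = C)
    (hmax : ∀ C x, rcMk (WP cs Θ) x = C → cs.length x ≤ cs.length (wc C))
    (huniq : ∀ C x, rcMk (WP cs Θ) x = C → cs.length x = cs.length (wc C) → x = wc C)
    (φ : RightCoset (WP cs Θ) → (RightCoset (WP cs Θ) →₀ LaurentPolynomial ℤ))
    -- condition (i)
    (hφ1 : ∀ C, (φ C) C = 1 ∧
      ∀ D, D ≠ C → (φ C) D ≠ 0 → BruhatLT cs (wc D) (wc C) ∧ InQZq ((φ C) D))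
    -- condition (ii)
    (hφ2 : ∀ (α : B) (C : RightCoset (WP cs Θ)),
      BruhatLT cs (wc (sAct cs Θ C α)) (wc C) →
      ∃ c : RightCoset (WP cs Θ) →₀ ℤ,
        (∀ D ∈ c.support, BruhatLE cs (wc D) (wc C)) ∧
        Tmap cs (sAct cs Θ) wc α (φ (sAct cs Θ C α)) = c.sum fun D n => n • φ D) :
    ∀ (C D : RightCoset (WP cs Θ)) (n : ℤ),
      Odd (n - ((cs.length (wc C) : ℤ) - (cs.length (wc D) : ℤ))) → ((φ C) D).coeff n = 0 :=
  stmt2_general cs Θ wc hmem hmax huniq φ hφ1 hφ2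

end
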